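/- For every parameter θ = (μ, Σ, τ) with Σ symmetric positive definite and τ_i > 0 for all i, P_θ is the orthogonal projection onto T_θ with respect to the Fisher information metric: for every ξ ∈ E and every η ∈ T_θ, g_θ(ξ − P_θ(ξ), η) = 0. -/

import Mathlib

open Matrix

noncomputable section

abbrev E (p n : ℕ) : Type := (Fin p → ℝ) × Matrix (Fin p) (Fin p) ℝ × (Fin n → ℝ)

/-- Fisher information form at a parameter with scatter matrix `S` and textures `τ`. -/
def g (p n : ℕ) (S : Matrix (Fin p) (Fin p) ℝ) (τ : Fin n → ℝ) (ξ η : E p n) : ℝ :=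
  (∑ i, (τ i)⁻¹) * (ξ.1 ⬝ᵥ (S⁻¹ *ᵥ η.1))
    + (n / 2 : ℝ) * (S⁻¹ * ξ.2.1ᵀ * S⁻¹ * η.2.1).trace
    + (p / 2 : ℝ) * ∑ i, ξ.2.2 i * η.2.2 i / τ i ^ 2

/-- Tangent space at a parameter with textures `τ`. -/
def Tan (p n : ℕ) (τ : Fin n → ℝ) : Set (E p n) :=
  {ξ | ξ.2.1.IsSymm ∧ ∑ i, ξ.2.2 i / τ i = 0}

/-- Projection onto the tangent space. -/
def Pr (p n : ℕ) (τ : Fin n → ℝ) (ξ : E p n) : E p n :=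
  (ξ.1, (1 / 2 : ℝ) • (ξ.2.1 + ξ.2.1ᵀ), ξ.2.2 - ((∑ i, ξ.2.2 i / τ i) / n) • τ)

/-- Christoffel term. -/
def Gam (p n : ℕ) (S : Matrix (Fin p) (Fin p) ℝ) (τ : Fin n → ℝ) (ξ η : E p n) : E p n :=
  ((-(1 / 2) : ℝ) • (((∑ i, ξ.2.2 i / τ i ^ 2) / ∑ i, (τ i)⁻¹) • η.1
      + ((ξ.2.1 * S⁻¹) *ᵥ η.1)
      + ((∑ i, η.2.2 i / τ i ^ 2) / ∑ i, (τ i)⁻¹) • ξ.1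
      + ((η.2.1 * S⁻¹) *ᵥ ξ.1)),
    ((∑ i, (τ i)⁻¹) / n) • vecMulVec η.1 ξ.1 - ξ.2.1 * S⁻¹ * η.2.1,
    fun i => (1 / p : ℝ) * (ξ.1 ⬝ᵥ (S⁻¹ *ᵥ η.1)) - ξ.2.2 i * η.2.2 i / τ i)


/-! The residual `ξ - Pr ξ` is `(0, skew part of ξ_Σ, c τ)` with `c = (∑ ξ_τ,i / τ_i) / n`. Against a
tangent `η`, the μ-term vanishes trivially, the Σ-term is the trace of a skew matrix times the
symmetric matrix `Σ⁻¹ η_Σ Σ⁻¹`, hence zero, and the τ-term is `c · ∑ η_τ,i / τ_i = 0`. -/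

theorem Matrix.trace_mul_eq_zero_of_transpose_eq_neg_of_isSymm {m R : Type*} [Fintype m]
    [CommRing R] [IsAddTorsionFree R] {A B : Matrix m m R} (hA : Aᵀ = -A) (hB : B.IsSymm) :
    (A * B).trace = 0 := by
  refine self_eq_neg.mp ?_
  calc (A * B).trace = (B * A)ᵀ.trace := by rw [trace_transpose, trace_mul_comm]
    _ = -(A * B).trace := by rw [transpose_mul, hA, hB.eq, neg_mul, trace_neg]

theorem Matrix.trace_conj_transpose_mul_eq_zero_of_transpose_eq_neg {m R : Type*} [Fintype m]
    [CommRing R] [IsAddTorsionFree R] {A B C : Matrix m m R} (hA : Aᵀ = -A) (hB : B.IsSymm)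
    (hC : C.IsSymm) : (C * Aᵀ * C * B).trace = 0 := by
  have hCBC : (C * B * C).IsSymm := by
    simp only [IsSymm, transpose_mul, hB.eq, hC.eq, Matrix.mul_assoc]
  rw [Matrix.mul_assoc, Matrix.mul_assoc, trace_mul_comm, Matrix.mul_assoc, Matrix.mul_assoc,
    ← Matrix.mul_assoc C B, hA, neg_mul, trace_neg,
    trace_mul_eq_zero_of_transpose_eq_neg_of_isSymm hA hCBC, neg_zero]

theorem Matrix.transpose_smul_sub_transpose {m R : Type*} [CommRing R] (c : R)
    (X : Matrix m m R) : (c • (X - Xᵀ))ᵀ = -(c • (X - Xᵀ)) := by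
  rw [transpose_smul, transpose_sub, transpose_transpose, ← smul_neg, neg_sub]

theorem Finset.sum_smul_mul_div_sq {ι K : Type*} [Fintype ι] [Field K] (c : K) (τ x : ι → K) :
    ∑ i, (c • τ) i * x i / τ i ^ 2 = c * ∑ i, x i / τ i := by
  rw [Finset.mul_sum]
  refine Finset.sum_congr rfl fun i _ => ?_
  rcases eq_or_ne (τ i) 0 with hτ | hτ
  · simp [hτ]
  · simp only [Pi.smul_apply, smul_eq_mul]
    field_simp

theorem sub_Pr_eq (p n : ℕ) (τ : Fin n → ℝ) (ξ : E p n) :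
    ξ - Pr p n τ ξ = (0, (1 / 2 : ℝ) • (ξ.2.1 - ξ.2.1ᵀ), ((∑ i, ξ.2.2 i / τ i) / n) • τ) := by
  ext <;> simp [Pr]
  ring

theorem stmt6_general (p n : ℕ)
    (S : Matrix (Fin p) (Fin p) ℝ) (τ : Fin n → ℝ)
    (hS : S.PosDef) :
    ∀ ξ : E p n, ∀ η ∈ Tan p n τ, g p n S τ (ξ - Pr p n τ ξ) η = 0 := by
  rintro ξ η ⟨hη, hητ⟩
  have hSinv : S⁻¹.IsSymm := (hS.isHermitian.inv).eq
  rw [sub_Pr_eq, g, zero_dotProduct,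
    trace_conj_transpose_mul_eq_zero_of_transpose_eq_neg (transpose_smul_sub_transpose _ _) hη hSinv,
    Finset.sum_smul_mul_div_sq, hητ]
  ring

/-- the residual of the projection is orthogonal to the tangent space
with respect to the Fisher information metric. -/
theorem stmt6 (p n : ℕ) (hp : 1 ≤ p) (hn : 1 ≤ n)
    (μ : Fin p → ℝ) (S : Matrix (Fin p) (Fin p) ℝ) (τ : Fin n → ℝ)
    (hS : S.PosDef) (hτ : ∀ i, 0 < τ i) :
    ∀ ξ : E p n, ∀ η ∈ Tan p n τ, g p n S τ (ξ - Pr p n τ ξ) η = 0 :=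
  stmt6_general p n S τ hS
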